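/- Single-mutation form of Proposition 4.4: let (B̃, Λ) be a compatible pair of type S = diag(s₁,…,sₙ), let k ∈ {1,…,n} and g ∈ ℤ^m. Set ε = ε(g_k) (namely ε = - if g_k ≥ 0 and ε = + if g_k < 0), g' := E_{k,ε}^{B̃} g and Λ' := (E_{k,ε}^{B̃})ᵀ Λ E_{k,ε}^{B̃}. Then the vector a' := Λ' g' is the X-tropical mutation of a := Λ g in direction k with respect to B̃; that is, a'_i = a_i for i ≠ k and a'_k = -a_k + max(Σ_{j=1}^m [b_{jk}]₊ a_j, Σ_{j=1}^m [-b_{jk}]₊ a_j). -/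
import Mathlib


open Matrix BigOperators

namespace ClusterF

/-- The positive part `[a]₊ = max a 0` of an integer. -/
def pp (a : ℤ) : ℤ := max a 0

variable {m n : ℕ}

/-- The principal part (top `n × n` submatrix) of an `m × n` matrix. -/
def prin (h : n ≤ m) (B : Matrix (Fin m) (Fin n) ℤ) : Matrix (Fin n) (Fin n) ℤ :=
  Matrix.of fun i j => B (Fin.castLE h i) j

/-- `B̃` is a mutation matrix: its principal part is skew-symmetrizable, i.e. there is a
diagonal integer matrix with positive diagonal entries `S` with `S * B` skew-symmetric. -/
def IsMutationMatrix (h : n ≤ m) (B : Matrix (Fin m) (Fin n) ℤ) : Prop :=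
  ∃ S : Fin n → ℤ, (∀ i, 0 < S i) ∧
    (Matrix.diagonal S * prin h B)ᵀ = -(Matrix.diagonal S * prin h B)

/-- The mutation `μ_k(B̃)` of an `m × n` matrix in direction `k`. -/
def mutB (h : n ≤ m) (B : Matrix (Fin m) (Fin n) ℤ) (k : Fin n) :
    Matrix (Fin m) (Fin n) ℤ :=
  Matrix.of fun i j =>
    if i = Fin.castLE h k ∨ j = k then -(B i j)
    else B i j + pp (B i k) * pp (B (Fin.castLE h k) j)
      - pp (-(B i k)) * pp (-(B (Fin.castLE h k) j))

/-- The `m × m` matrix `E_{k,ε}^{B̃}`: the identity with its `k`-th column replaced by the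
column with entry `-1` in position `k` and `[-ε b_{ik}]₊` in positions `i ≠ k`. -/
def Emat (h : n ≤ m) (B : Matrix (Fin m) (Fin n) ℤ) (k : Fin n) (ε : ℤ) :
    Matrix (Fin m) (Fin m) ℤ :=
  Matrix.of fun i j =>
    if j = Fin.castLE h k then
      (if i = Fin.castLE h k then -1 else pp (-(ε * B i k)))
    else if i = j then 1 else 0

/-- The `n × n` matrix `F_{k,ε}^{B̃}`: the identity with its `k`-th row replaced by the
row with entry `-1` in position `k` and `[ε b_{ki}]₊` in positions `i ≠ k`. -/
def Fmat (h : n ≤ m) (B : Matrix (Fin m) (Fin n) ℤ) (k : Fin n) (ε : ℤ) :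
    Matrix (Fin n) (Fin n) ℤ :=
  Matrix.of fun i j =>
    if i = k then (if j = k then -1 else pp (ε * B (Fin.castLE h k) j))
    else if i = j then 1 else 0

/-- The `n × m` matrix `(S | 0)`. -/
def typeMat (h : n ≤ m) (S : Fin n → ℤ) : Matrix (Fin n) (Fin m) ℤ :=
  Matrix.of fun i j => if j = Fin.castLE h i then S i else 0

/-- The Y-tropical mutation of `g ∈ ℤ^m` in direction `k`, with respect to `B̂ = -B̃ᵀ`
(so `b̂_{ki} = -b_{ik}`):  `g'_k = -g_k` and
`g'_i = g_i + [b̂_{ki}]₊ g_k - b̂_{ki}[g_k]₊` for `i ≠ k`. -/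
def yTrop (h : n ≤ m) (B : Matrix (Fin m) (Fin n) ℤ) (k : Fin n) (g : Fin m → ℤ) :
    Fin m → ℤ :=
  fun i =>
    if i = Fin.castLE h k then -(g (Fin.castLE h k))
    else g i + pp (-(B i k)) * g (Fin.castLE h k) - (-(B i k)) * pp (g (Fin.castLE h k))

/-- The X-tropical mutation of `a ∈ ℤ^m` in direction `k` with respect to `B̃`:
`a'_i = a_i` for `i ≠ k` and
`a'_k = -a_k + max (Σ_j [b_{jk}]₊ a_j) (Σ_j [-b_{jk}]₊ a_j)`. -/
def xTrop (h : n ≤ m) (B : Matrix (Fin m) (Fin n) ℤ) (k : Fin n) (a : Fin m → ℤ) :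
    Fin m → ℤ :=
  fun i =>
    if i = Fin.castLE h k then
      -(a i) + max (∑ j, pp (B j k) * a j) (∑ j, pp (-(B j k)) * a j)
    else a i


lemma Emat_mul_self (h : n ≤ m) (B : Matrix (Fin m) (Fin n) ℤ) (k : Fin n) (ε : ℤ) :
    Emat h B k ε * Emat h B k ε = 1 := by
  ext i j
  rw [Matrix.mul_apply]
  by_cases hj : j = Fin.castLE h k
  · subst hj
    by_cases hi : i = Fin.castLE h k
    · subst hi
      rw [Finset.sum_eq_single (Fin.castLE h k)]
      · simp [Emat]
      · intro b _ hb; simp [Emat, hb, Ne.symm hb]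
      · simp
    · have : ∀ l, Emat h B k ε i l * Emat h B k ε l (Fin.castLE h k)
          = (if l = Fin.castLE h k then -(pp (-(ε * B i k))) else 0)
            + (if l = i then pp (-(ε * B i k)) else 0) := by
        intro l
        by_cases hl : l = Fin.castLE h k
        · subst hl; simp [Emat, hi, Ne.symm hi]
        · by_cases hli : l = i
          · subst hli; simp [Emat, hl, hi]
          · simp [Emat, hl, hli, Ne.symm hli]
      simp only [this, Finset.sum_add_distrib, Finset.sum_ite_eq', Finset.mem_univ, if_true]
      simp [Matrix.one_apply, hi]
  · have : ∀ l, Emat h B k ε i l * Emat h B k ε l j = if l = j then Emat h B k ε i j else 0 := by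
      intro l
      by_cases hl : l = j
      · subst hl; simp [Emat, hj]
      · by_cases hil : i = l
        · subst hil; simp [Emat, hj, hl, Ne.symm hl]
        · simp [Emat, hj, hl, hil]
    simp only [this, Finset.sum_ite_eq', Finset.mem_univ, if_true]
    by_cases hij : i = j
    · subst hij; simp [Emat, hj, Matrix.one_apply]
    · simp [Emat, hj, hij, Matrix.one_apply, Ne.symm]

lemma pp_sub_pp_neg (x : ℤ) : pp x - pp (-x) = x := by
  unfold pp; omega

/-- For a compatible pair (B̃, Λ) of type S, g ∈ ℤ^m, ε = ε(g_k),
g' = E_{k,ε}^{B̃} g and Λ' = (E_{k,ε}^{B̃})ᵀ Λ E_{k,ε}^{B̃}, the vector a' = Λ' g' is the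
X-tropical mutation of a = Λ g in direction k with respect to B̃. -/
theorem stmt15 {m n : ℕ} (h : n ≤ m) (B : Matrix (Fin m) (Fin n) ℤ)
    (Λ : Matrix (Fin m) (Fin m) ℤ) (S : Fin n → ℤ)
    (hΛ : Λᵀ = -Λ) (hS : ∀ i, 0 < S i) (hcomp : Bᵀ * Λ = typeMat h S)
    (k : Fin n) (g : Fin m → ℤ)
    (ε : ℤ) (hε : ε = if 0 ≤ g (Fin.castLE h k) then -1 else 1)
    (g' a a' : Fin m → ℤ) (Λ' : Matrix (Fin m) (Fin m) ℤ)
    (hg' : g' = Emat h B k ε *ᵥ g)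
    (hΛ' : Λ' = (Emat h B k ε)ᵀ * Λ * Emat h B k ε)
    (ha : a = Λ *ᵥ g) (ha' : a' = Λ' *ᵥ g') :
    a' = xTrop h B k a := by
  have ha'2 : a' = (Emat h B k ε)ᵀ *ᵥ a := by
    rw [ha', hΛ', hg', ha, mulVec_mulVec, Matrix.mul_assoc ((Emat h B k ε)ᵀ * Λ),
      Emat_mul_self, Matrix.mul_one, mulVec_mulVec]
  -- skew form vanishes
  have hd : ∀ x : Fin m → ℤ, x ⬝ᵥ (Λ *ᵥ x) = 0 := by
    intro x
    have h1 : x ⬝ᵥ (Λ *ᵥ x) = (Λᵀ *ᵥ x) ⬝ᵥ x := by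
      rw [Matrix.dotProduct_mulVec, Matrix.mulVec_transpose]
    rw [hΛ, Matrix.neg_mulVec, neg_dotProduct, dotProduct_comm (Λ *ᵥ x) x] at h1
    linarith
  have hBkk : B (Fin.castLE h k) k = 0 := by
    have h0 : ((Bᵀ * Λ) * B) k k = S k * B (Fin.castLE h k) k := by
      rw [hcomp, Matrix.mul_apply]
      rw [Finset.sum_eq_single (Fin.castLE h k)]
      · simp [typeMat]
      · intro b _ hb; simp [typeMat, hb]
      · simp
    have h1 : ((Bᵀ * Λ) * B) k k = (fun j => B j k) ⬝ᵥ (Λ *ᵥ fun j => B j k) := by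
      rw [Matrix.mul_assoc, Matrix.mul_apply]
      simp only [dotProduct, mulVec, Matrix.transpose_apply, Matrix.mul_apply, dotProduct]
    have h2 := hd (fun j => B j k)
    rw [h1, h2] at h0
    have := (hS k).ne'
    rcases mul_eq_zero.mp h0.symm with h3 | h3
    · exact absurd h3 this
    · exact h3
  have hkey : ∑ j, B j k * a j = S k * g (Fin.castLE h k) := by
    have h1 : ∑ j, B j k * a j = ((Bᵀ * Λ) *ᵥ g) k := by
      rw [← mulVec_mulVec, ha]
      simp [mulVec, dotProduct, Matrix.transpose_apply]
    rw [h1, hcomp]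
    rw [mulVec, dotProduct, Finset.sum_eq_single (Fin.castLE h k)]
    · simp [typeMat]
    · intro b _ hb; simp [typeMat, hb]
    · simp
  have hPN : (∑ j, pp (B j k) * a j) - (∑ j, pp (-(B j k)) * a j)
      = S k * g (Fin.castLE h k) := by
    rw [← hkey, ← Finset.sum_sub_distrib]
    refine Finset.sum_congr rfl fun j _ => ?_
    rw [← sub_mul, pp_sub_pp_neg]
  funext i
  by_cases hi : i = Fin.castLE h k
  · subst hi
    rw [ha'2, xTrop, if_pos rfl]
    rw [mulVec, dotProduct]
    have hterm : ∀ j, (Emat h B k ε)ᵀ (Fin.castLE h k) j * a j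
        = pp (-(ε * B j k)) * a j + (if j = Fin.castLE h k then -(a j) else 0) := by
      intro j
      by_cases hj : j = Fin.castLE h k
      · subst hj; simp [Emat, hBkk, pp]
      · simp [Emat, hj]
    simp only [hterm, Finset.sum_add_distrib, Finset.sum_ite_eq', Finset.mem_univ, if_true]
    rw [add_comm]
    congr 1
    by_cases hgk : 0 ≤ g (Fin.castLE h k)
    · rw [hε, if_pos hgk]
      have hmax : max (∑ j, pp (B j k) * a j) (∑ j, pp (-(B j k)) * a j)
          = ∑ j, pp (B j k) * a j := by
        refine max_eq_left ?_
        have : 0 ≤ S k * g (Fin.castLE h k) := mul_nonneg (hS k).le hgk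
        omega
      rw [hmax]
      refine Finset.sum_congr rfl fun j _ => ?_
      congr 1; congr 1; ring
    · rw [hε, if_neg hgk]
      have hmax : max (∑ j, pp (B j k) * a j) (∑ j, pp (-(B j k)) * a j)
          = ∑ j, pp (-(B j k)) * a j := by
        refine max_eq_right ?_
        have : S k * g (Fin.castLE h k) < 0 :=
          mul_neg_of_pos_of_neg (hS k) (by omega)
        omega
      rw [hmax]
      refine Finset.sum_congr rfl fun j _ => ?_
      congr 2; ring
  · rw [ha'2, xTrop, if_neg hi]
    rw [mulVec, dotProduct]
    rw [Finset.sum_eq_single i]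
    · simp [Emat, hi]
    · intro b _ hb; simp [Emat, hi, hb]
    · simp

end ClusterF
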